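/- arXiv:1610.04633 — 5 statements merged into one kernel-verified Lean document; each statement's English description precedes it below -/
import Mathlib

section
/- Let D be a degree on the ordinal S. For all ordinals a, b, c < S with b < a: if c has degree a, then c has degree b. -/
open Ordinal Set

noncomputable section

/-- The set of limit points of a set `X` of ordinals: the limit ordinals `c` such that
`X ∩ c` is unbounded in `c`. -/
def limPts (X : Set Ordinal) : Set Ordinal :=
  {c | Order.IsSuccLimit c ∧ ∀ b < c, ∃ x ∈ X, b < x ∧ x < c}

/-- `D` is a degree on the ordinal `S`.  For `c, a < S`, `D c a` reads "`c` has degree `a`". -/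
structure IsDegree (S : Ordinal) (D : Ordinal → Ordinal → Prop) : Prop where
  /-- every `c < S` has degree `0` -/
  deg_zero : ∀ c < S, D c 0
  /-- `0` only has degree `0` -/
  zero_only : ∀ a < S, D 0 a → a = 0
  /-- for a limit `a`, `c` has degree `a` iff it has every degree less than `a` -/
  limit : ∀ a < S, Order.IsSuccLimit a → ∀ c < S, (D c a ↔ ∀ b < a, D c b)
  /-- the successor condition -/
  succ : ∀ a, a + 1 < S →
      {c | c < S ∧ D c (a + 1)} = limPts {c | c < S ∧ D c a} ∩ {c | c < S} ∨
      ∃ d ≤ a, d < S ∧ Order.IsSuccLimit d ∧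
        {c | c < S ∧ D c (a + 1)} =
          (limPts {c | c < S ∧ D c a} ∪ {c | (c < S ∧ D c a) ∧ c ≤ d}) ∩ {c | c < S}

/-- The set of candidate values for the collapsing function `C(a,b)`: ordinals `c < S`
above `b` having some degree `a' ≥ a`. -/
def CSet (S : Ordinal) (D : Ordinal → Ordinal → Prop) (a b : Ordinal) : Set Ordinal :=
  {c | c < S ∧ b < c ∧ ∃ a', a ≤ a' ∧ a' < S ∧ D c a'}

/-- `C(a,b)` is defined iff some candidate value exists. -/
def CDefined (S : Ordinal) (D : Ordinal → Ordinal → Prop) (a b : Ordinal) : Prop :=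
  (CSet S D a b).Nonempty

/-- The collapsing function `C(a,b)`: the least element of `CSet S D a b`
(meaningful when `CDefined S D a b`). -/
def Cval (S : Ordinal) (D : Ordinal → Ordinal → Prop) (a b : Ordinal) : Ordinal :=
  sInf (CSet S D a b)

/-- `a` is maximal in `C(a,b)`: `C(a,b)` is defined and has no degree strictly greater
than `a`. -/
def CMaximal (S : Ordinal) (D : Ordinal → Ordinal → Prop) (a b : Ordinal) : Prop :=
  CDefined S D a b ∧ ∀ a', a < a' → a' < S → ¬ D (Cval S D a b) a'

/-- `b` is minimal in `C(a,b)`: `C(a,b)` is defined and `C(a,b') < C(a,b)` for every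
`b' < b`. -/
def CMinimal (S : Ordinal) (D : Ordinal → Ordinal → Prop) (a b : Ordinal) : Prop :=
  CDefined S D a b ∧ ∀ b' < b, Cval S D a b' < Cval S D a b

end

/-!
By induction on `a < S` we prove, simultaneously, that `C_a` is closed below `S` (it contains
its limit points `< S`) and that `C_a ⊆ C_b` for all `b < a`. Closedness of `C_a` makes both
alternatives of the successor axiom give `C_{a+1} ⊆ C_a`, so `lim(C_{a+1}) ⊆ lim(C_a) ⊆ C_{a+1}`;
at limit stages `C_a = ⋂_{b<a} C_b` is an intersection of closed sets.
-/

-- The set `C_a` of the successor axiom.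
def degSet (S : Ordinal) (D : Ordinal → Ordinal → Prop) (a : Ordinal) : Set Ordinal :=
  {c | c < S ∧ D c a}

lemma limPts_mono {X Y : Set Ordinal} (hXY : X ⊆ Y) : limPts X ⊆ limPts Y :=
  fun _ ⟨hlim, hX⟩ => ⟨hlim, fun b hb =>
    let ⟨x, hx, hbx, hxc⟩ := hX b hb
    ⟨x, hXY hx, hbx, hxc⟩⟩

namespace IsDegree

variable {S : Ordinal} {D : Ordinal → Ordinal → Prop} {a : Ordinal}

lemma degSet_succ_subset (hD : IsDegree S D) (ha : a + 1 < S)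
    (hclosed : limPts (degSet S D a) ∩ Iio S ⊆ degSet S D a) :
    degSet S D (a + 1) ⊆ degSet S D a := by
  intro c hc
  rcases hD.succ a ha with heq | ⟨d, -, -, -, heq⟩
  · rw [degSet, heq] at hc
    exact hclosed hc
  · rw [degSet, heq] at hc
    rcases hc with ⟨hlim | hle, hcS⟩
    exacts [hclosed ⟨hlim, hcS⟩, hle.1]

lemma limPts_degSet_succ_subset (hD : IsDegree S D) (ha : a + 1 < S)
    (hsub : degSet S D (a + 1) ⊆ degSet S D a) :
    limPts (degSet S D (a + 1)) ∩ Iio S ⊆ degSet S D (a + 1) := by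
  rintro c ⟨hlim, hcS⟩
  have hlim' := limPts_mono hsub hlim
  rcases hD.succ a ha with heq | ⟨d, -, -, -, heq⟩ <;> rw [degSet, heq]
  exacts [⟨hlim', hcS⟩, ⟨Or.inl hlim', hcS⟩]

lemma degSet_subset_of_isSuccLimit (hD : IsDegree S D) (ha : a < S)
    (hlim : Order.IsSuccLimit a) {b : Ordinal} (hb : b < a) :
    degSet S D a ⊆ degSet S D b :=
  fun c ⟨hcS, hc⟩ => ⟨hcS, (hD.limit a ha hlim c hcS).1 hc b hb⟩

lemma limPts_degSet_subset_of_isSuccLimit (hD : IsDegree S D) (ha : a < S)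
    (hlim : Order.IsSuccLimit a)
    (hclosed : ∀ b < a, limPts (degSet S D b) ∩ Iio S ⊆ degSet S D b) :
    limPts (degSet S D a) ∩ Iio S ⊆ degSet S D a := by
  rintro c ⟨hc, hcS⟩
  refine ⟨hcS, (hD.limit a ha hlim c hcS).2 fun b hb => ?_⟩
  have hsub := hD.degSet_subset_of_isSuccLimit ha hlim hb
  exact (hclosed b hb ⟨limPts_mono hsub hc, hcS⟩).2

lemma limPts_degSet_subset_and_degSet_antitone (hD : IsDegree S D) (ha : a < S) :
    limPts (degSet S D a) ∩ Iio S ⊆ degSet S D a ∧ ∀ b < a, degSet S D a ⊆ degSet S D b := by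
  induction a using WellFoundedLT.induction with
  | ind a IH =>
  rcases Ordinal.zero_or_succ_or_isSuccLimit a with rfl | ⟨a, rfl⟩ | hlim
  · exact ⟨fun c hc => ⟨hc.2, hD.deg_zero c hc.2⟩, fun b hb => absurd hb not_lt_zero⟩
  · rw [Order.succ_eq_add_one] at ha IH ⊢
    obtain ⟨hclosed, hanti⟩ := IH a (lt_add_one a) ((lt_add_one a).trans ha)
    have hsub := hD.degSet_succ_subset ha hclosed
    refine ⟨hD.limPts_degSet_succ_subset ha hsub, fun b hb => ?_⟩
    rcases (Order.lt_add_one_iff.1 hb).lt_or_eq with hb | rfl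
    exacts [hsub.trans (hanti b hb), hsub]
  · exact ⟨hD.limPts_degSet_subset_of_isSuccLimit ha hlim fun b hb => (IH b hb (hb.trans ha)).1,
      fun b hb => hD.degSet_subset_of_isSuccLimit ha hlim hb⟩

end IsDegree

theorem degree_mono_general (S : Ordinal) (D : Ordinal → Ordinal → Prop) (hD : IsDegree S D)
    (a b c : Ordinal) (ha : a < S) (hc : c < S) (hba : b < a) (h : D c a) :
    D c b :=
  ((hD.limPts_degSet_subset_and_degSet_antitone ha).2 b hba ⟨hc, h⟩).2

theorem degree_mono (S : Ordinal) (D : Ordinal → Ordinal → Prop) (hD : IsDegree S D)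
    (a b c : Ordinal) (ha : a < S) (hb : b < S) (hc : c < S) (hba : b < a) (h : D c a) :
    D c b :=
  degree_mono_general S D hD a b c ha hc hba h
end

section
/- Let D be a degree on the ordinal S and let a, b < S with 0 < a ≤ b. Then b has degree a if and only if there exist ordinals c and d with d ≥ a and b = c + ω^d. -/
open Ordinal Set

/-!
Every nonzero ordinal is `c + ω ^ d` with a unique last exponent `d`, and `b` has degree `a`
iff `a ≤ d`, by induction on `a`. At limits this follows from the uniqueness of `d`. At
successors, the ordinals with last exponent `≥ a` accumulate exactly at those with last exponent
`> a`: strictly between `c` and `c + ω ^ d` every ordinal has last exponent `< d`, while for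
`a < d` the ordinal `t + ω ^ a` stays below `c + ω ^ d` whenever `t` does.
-/

namespace Ordinal

theorem exists_eq_add_omega0_opow {b : Ordinal} (hb : b ≠ 0) :
    ∃ c d : Ordinal, b = c + ω ^ d := by
  induction b using WellFoundedLT.induction with
  | _ b ih =>
  have hsplit : ω ^ log ω b + (b - ω ^ log ω b) = b :=
    Ordinal.add_sub_cancel_of_le (opow_log_le_self ω hb)
  rcases eq_or_ne (b - ω ^ log ω b) 0 with hr | hr
  · exact ⟨0, log ω b, by simpa [hr] using hsplit.symm⟩
  · obtain ⟨c, d, hcd⟩ := ih _ (sub_omega0_opow_log_lt hb) hr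
    exact ⟨ω ^ log ω b + c, d, by rw [add_assoc, ← hcd, hsplit]⟩

theorem add_omega0_opow_le_add_omega0_opow {c c' d e : Ordinal} (hde : d ≤ e)
    (hc : c < c' + ω ^ e) : c + ω ^ d ≤ c' + ω ^ e := by
  obtain ⟨z, hz, hcz⟩ := (lt_add_iff (opow_ne_zero e omega0_ne_zero)).1 hc
  calc c + ω ^ d ≤ c' + (z + ω ^ e) := by
        rw [← add_assoc]; gcongr; exact omega0_pos
    _ = c' + ω ^ e := by rw [add_omega0_opow hz]

theorem add_omega0_opow_lt_add_omega0_opow {c c' d e : Ordinal} (hde : d < e)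
    (hc : c < c' + ω ^ e) : c + ω ^ d < c' + ω ^ e :=
  calc c + ω ^ d < c + ω ^ (d + 1) :=
        (add_lt_add_iff_left c).2 ((opow_lt_opow_iff_right one_lt_omega0).2 (lt_add_one d))
    _ ≤ c' + ω ^ e := add_omega0_opow_le_add_omega0_opow (Order.add_one_le_of_lt hde) hc

theorem eq_of_add_omega0_opow_eq {c c' d e : Ordinal} (h : c + ω ^ d = c' + ω ^ e) : d = e := by
  have hc : c < c' + ω ^ e := h ▸ lt_add_of_pos_right c (opow_pos d omega0_pos)
  have hc' : c' < c + ω ^ d := h ▸ lt_add_of_pos_right c' (opow_pos e omega0_pos)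
  refine le_antisymm (not_lt.1 fun hed => ?_) (not_lt.1 fun hde => ?_)
  · exact (add_omega0_opow_lt_add_omega0_opow hed hc').ne h.symm
  · exact (add_omega0_opow_lt_add_omega0_opow hde hc).ne h

theorem exists_add_omega0_opow_iff_forall_lt {a b : Ordinal} (ha : Order.IsSuccLimit a) :
    (∃ c d : Ordinal, a ≤ d ∧ b = c + ω ^ d) ↔
      ∀ a' < a, ∃ c d : Ordinal, a' ≤ d ∧ b = c + ω ^ d := by
  refine ⟨fun ⟨c, d, had, hb⟩ a' ha' => ⟨c, d, ha'.le.trans had, hb⟩, fun h => ?_⟩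
  obtain ⟨c, d, -, hb⟩ := h 0 ha.bot_lt
  refine ⟨c, d, not_lt.1 fun hda => ?_, hb⟩
  obtain ⟨c', d', hd', hb'⟩ := h (d + 1) (ha.add_one_lt hda)
  exact (lt_add_one d).not_ge (eq_of_add_omega0_opow_eq (hb.symm.trans hb') ▸ hd')

end Ordinal

theorem mem_limPts_iff {X : Set Ordinal} {a b : Ordinal} (hab : a < b)
    (hX : ∀ y, a < y → y < b → (y ∈ X ↔ ∃ c d : Ordinal, a ≤ d ∧ y = c + ω ^ d)) :
    b ∈ limPts X ↔ ∃ c d : Ordinal, a < d ∧ b = c + ω ^ d := by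
  constructor
  · rintro ⟨hlim, hunb⟩
    obtain ⟨c, d, rfl⟩ := exists_eq_add_omega0_opow hlim.ne_bot
    refine ⟨c, d, not_le.1 fun hda => ?_, rfl⟩
    have hcb : c < c + ω ^ d := lt_add_of_pos_right c (opow_pos d omega0_pos)
    obtain ⟨y, hyX, hy, hyb⟩ := hunb (max c a) (max_lt hcb hab)
    obtain ⟨c', e, hae, rfl⟩ := (hX y ((le_max_right c a).trans_lt hy) hyb).1 hyX
    exact hyb.not_ge <|
      add_omega0_opow_le_add_omega0_opow (hda.trans hae) ((le_max_left c a).trans_lt hy)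
  · rintro ⟨c, d, had, rfl⟩
    have hd : d ≠ 0 := (pos_of_gt had).ne'
    refine ⟨isSuccLimit_add c (isSuccLimit_opow_left isSuccLimit_omega0 hd), fun x hx => ?_⟩
    set t := max x a
    have ht : t < t + ω ^ a := lt_add_of_pos_right t (opow_pos a omega0_pos)
    have htb : t + ω ^ a < c + ω ^ d := add_omega0_opow_lt_add_omega0_opow had (max_lt hx hab)
    exact ⟨t + ω ^ a, (hX _ ((le_max_right x a).trans_lt ht) htb).2 ⟨t, a, le_rfl, rfl⟩,
      (le_max_left x a).trans_lt ht, htb⟩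

namespace IsDegree

variable {S : Ordinal} {D : Ordinal → Ordinal → Prop}

theorem degree_add_one_iff (hD : IsDegree S D) {a b : Ordinal} (ha : a + 1 < S) (hab : a < b)
    (hb : b < S) : D b (a + 1) ↔ b ∈ limPts {c | c < S ∧ D c a} := by
  rcases hD.succ a ha with h | ⟨d, hda, -, -, h⟩
  · have := Set.ext_iff.1 h b
    simp only [mem_ofPred_eq, mem_inter_iff] at this
    tauto
  · have := Set.ext_iff.1 h b
    have hbd : ¬ b ≤ d := not_le.2 (hda.trans_lt hab)
    simp only [mem_ofPred_eq, mem_inter_iff, mem_union] at this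
    tauto

theorem degree_iff (hD : IsDegree S D) {a b : Ordinal} (ha : a < S) (hab : a ≤ b) (hb : b < S)
    (hb0 : b ≠ 0) : D b a ↔ ∃ c d : Ordinal, a ≤ d ∧ b = c + ω ^ d := by
  induction a using Ordinal.limitRecOn generalizing b with
  | zero =>
    obtain ⟨c, d, rfl⟩ := exists_eq_add_omega0_opow hb0
    exact iff_of_true (hD.deg_zero _ hb) ⟨c, d, zero_le, rfl⟩
  | add_one a ih =>
    have hab' : a < b := (lt_add_one a).trans_le hab
    simp_rw [Order.add_one_le_iff]
    rw [hD.degree_add_one_iff ha hab' hb]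
    refine mem_limPts_iff hab' fun y hay hyb => ?_
    rw [mem_ofPred_eq, and_iff_right (hyb.trans hb)]
    exact ih ((lt_add_one a).trans ha) hay.le (hyb.trans hb) (pos_of_gt hay).ne'
  | limit a hlim ih =>
    rw [hD.limit a ha hlim b hb, exists_add_omega0_opow_iff_forall_lt hlim]
    exact forall₂_congr fun a' ha' => ih a' ha' (ha'.trans ha) (ha'.le.trans hab) hb hb0

end IsDegree

theorem degree_iff_add_omega_pow (S : Ordinal) (D : Ordinal → Ordinal → Prop)
    (hD : IsDegree S D) (a b : Ordinal) (ha : a < S) (hb : b < S)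
    (ha0 : 0 < a) (hab : a ≤ b) :
    D b a ↔ ∃ c d : Ordinal, a ≤ d ∧ b = c + omega0 ^ d :=
  hD.degree_iff ha hab hb (ha0.trans_le hab).ne'
end

section
/- Let D be a degree on the ordinal S. Suppose b = C(c,d) where c is maximal in C(c,d), and suppose C(a,b) is defined. Then b is minimal in C(a,b) if and only if a ≤ c. -/
open Ordinal Set

section Collapsing

variable {S : Ordinal} {D : Ordinal → Ordinal → Prop} {a b c d : Ordinal}

theorem CSet_anti_left (hac : a ≤ c) : CSet S D c b ⊆ CSet S D a b :=
  fun _ ⟨heS, hbe, a', hca', ha'S, hD⟩ => ⟨heS, hbe, a', hac.trans hca', ha'S, hD⟩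

theorem CSet_anti_right (hbd : b ≤ d) : CSet S D a d ⊆ CSet S D a b :=
  fun _ ⟨heS, hde, rest⟩ => ⟨heS, hbd.trans_lt hde, rest⟩

theorem Cval_mem_CSet (h : CDefined S D a b) : Cval S D a b ∈ CSet S D a b :=
  csInf_mem h

theorem Cval_le_of_mem {e : Ordinal} (he : e ∈ CSet S D a b) : Cval S D a b ≤ e :=
  csInf_le' he

theorem lt_Cval (h : CDefined S D a b) : b < Cval S D a b :=
  (Cval_mem_CSet h).2.1

/-- No candidate for `C(a,d)` lies in `(d, C(c,d)]`: one below `C(c,d)` would be a candidate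
for `C(c,d)`, and `C(c,d)` itself has no degree above `c`. -/
theorem CSet_eq_CSet_Cval_of_CMaximal (hmax : CMaximal S D c d) (hca : c < a) :
    CSet S D a d = CSet S D a (Cval S D c d) := by
  refine (CSet_anti_right (lt_Cval hmax.1).le).antisymm' fun e he => ?_
  refine ⟨he.1, ?_, he.2.2⟩
  obtain ⟨a', haa', ha'S, hDe⟩ := he.2.2
  rcases (Cval_le_of_mem (CSet_anti_left hca.le he)).lt_or_eq with hlt | rfl
  · exact hlt
  · exact absurd hDe (hmax.2 a' (hca.trans_le haa') ha'S)

end Collapsing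

theorem CMinimal_iff_le_general (S : Ordinal) (D : Ordinal → Ordinal → Prop)
    (a b c d : Ordinal) (hb : b = Cval S D c d)
    (hmax : CMaximal S D c d) (h : CDefined S D a b) :
    CMinimal S D a b ↔ a ≤ c := by
  subst hb
  constructor
  · rintro ⟨-, hmin⟩
    by_contra! hca
    have hstuck := hmin d (lt_Cval hmax.1)
    rw [Cval, Cval, CSet_eq_CSet_Cval_of_CMaximal hmax hca] at hstuck
    exact hstuck.false
  · intro hac
    refine ⟨h, fun b' hb' => ?_⟩
    obtain ⟨hbS, -, hdeg⟩ := CSet_anti_left hac (Cval_mem_CSet hmax.1)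
    exact (Cval_le_of_mem ⟨hbS, hb', hdeg⟩).trans_lt (lt_Cval h)

theorem CMinimal_iff_le (S : Ordinal) (D : Ordinal → Ordinal → Prop)
    (hD : IsDegree S D) (a b c d : Ordinal) (hb : b = Cval S D c d)
    (hmax : CMaximal S D c d) (h : CDefined S D a b) :
    CMinimal S D a b ↔ a ≤ c :=
  CMinimal_iff_le_general S D a b c d hb hmax h
end

section
/- Fix a positive integer n. For every standard term a of the n-th ordinal notation system and every nonempty suffix v of the prefix form of a, the string obtained by prepending to v the unique number of 'C' symbols that makes it the prefix form of a well-formed term is the prefix form of a standard term. -/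
inductive NTerm where
  | zero : NTerm
  | Om : NTerm
  | C (a b : NTerm) : NTerm

/-- Symbols of the alphabet `{C, 0, Ω_n}`. -/
inductive NSym where
  | C : NSym
  | zero : NSym
  | Om : NSym

/-- The symbol order `'C' < '0' < 'Ω_n'`. -/
def symLt : NSym → NSym → Prop
  | .C, .zero => True
  | .C, .Om => True
  | .zero, .Om => True
  | _, _ => False

/-- The postfix (reverse Polish) string of a term, the base argument written first
(so `C(C(0,0),0)` is written `000CC`). -/
def postfixStr : NTerm → List NSym
  | .zero => [NSym.zero]
  | .Om => [NSym.Om]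
  | .C a b => postfixStr b ++ postfixStr a ++ [NSym.C]

/-- The prefix (Polish) string of a term. -/
def prefixStr : NTerm → List NSym
  | .zero => [NSym.zero]
  | .Om => [NSym.Om]
  | .C a b => NSym.C :: (prefixStr a ++ prefixStr b)

/-- Comparison of terms: lexicographic comparison of their postfix strings with
`'C' < '0' < 'Ω_n'` (a proper prefix counting as smaller). -/
def tlt (a b : NTerm) : Prop :=
  List.Lex symLt (postfixStr a) (postfixStr b)

/-- `x` is a proper subterm (occurrence) of `y`. -/
inductive PSub : NTerm → NTerm → Prop
  | left (a b : NTerm) : PSub a (NTerm.C a b)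
  | right (a b : NTerm) : PSub b (NTerm.C a b)
  | transLeft (x a b : NTerm) : PSub x a → PSub x (NTerm.C a b)
  | transRight (x a b : NTerm) : PSub x b → PSub x (NTerm.C a b)

/-- `nlt k a b` : `a` is `k`-built from below from `< b`.  `a <_0 b` iff `a < b`, and
`a <_{k+1} b` iff every subterm occurrence `x ∈ T_a` with `x > a` has a proper subterm
`y ⊏ x` with `y <_k b`. -/
def nlt : ℕ → NTerm → NTerm → Prop
  | 0, a, b => tlt a b
  | k + 1, a, b => ∀ x : NTerm, (x = a ∨ PSub x a) → tlt a x →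
      ∃ y : NTerm, PSub y x ∧ nlt k y b

/-- Standardness for the `n`-th system: `0` and `Ω_n` are standard, and `C(a,b)` is
standard iff `a` and `b` are standard, `b` is `0` or `Ω_n` or of the form `C(c,d)` with
`a ≤ c`, and `a` is `n`-built from below from `< C(a,b)`. -/
def Std (n : ℕ) : NTerm → Prop
  | .zero => True
  | .Om => True
  | .C a b => Std n a ∧ Std n b ∧
      (b = NTerm.zero ∨ b = NTerm.Om ∨
        ∃ c d : NTerm, b = NTerm.C c d ∧ (tlt a c ∨ a = c)) ∧
      nlt n a (NTerm.C a b)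

/-!
Cutting `prefixStr a` in front of a nonempty suffix and completing it with `'C'`s yields a term
`t` whose postfix form is `σ ++ 'C'^k` for a nonempty prefix `σ` of the postfix form of `a`.
Proper subterms of `t` lying inside `σ` are subterms of `a`, and they compare with `t` as they
compare with the subterm `x` of `a` that was cut, so `x <_n C(x, y)` carries over to
`t <_n C(t, y)`. The other proper subterms lie on the left spine of `t` and are not above `t`:
an inversion `C(u, s) < u` in a standard term forces its postfix form to start with `0` and to
contain `Ω`, whereas for `n ≥ 1` a term `x <_n b` containing `Ω` must start with `Ω`, since
otherwise `x < Ω` and `Ω` has no proper subterm.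
-/

namespace NSym

def rank : NSym → ℕ
  | C => 0
  | zero => 1
  | Om => 2

theorem rank_injective : Function.Injective rank := by
  intro a b
  cases a <;> cases b <;> simp [rank]

instance : LinearOrder NSym := LinearOrder.lift' rank rank_injective

theorem C_le (b : NSym) : C ≤ b := by cases b <;> decide

theorem le_Om (b : NSym) : b ≤ Om := by cases b <;> decide

theorem lt_Om_of_ne {b : NSym} (h : b ≠ Om) : b < Om := by
  cases b <;> first | decide | exact absurd rfl h

theorem le_zero_of_ne_Om {b : NSym} (h : b ≠ Om) : b ≤ zero := by
  cases b <;> first | decide | exact absurd rfl h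

end NSym

theorem symLt_iff_lt {a b : NSym} : symLt a b ↔ a < b := by
  cases a <;> cases b <;> simp [symLt] <;> decide

namespace List

theorem IsSuffix.suffix_or_eq_append {α : Type*} {v l₁ l₂ : List α} (h : v <:+ l₁ ++ l₂) :
    v <:+ l₂ ∨ ∃ w, w ≠ [] ∧ w <:+ l₁ ∧ v = w ++ l₂ := by
  obtain ⟨u, hu⟩ := h
  rcases append_eq_append_iff.1 hu with ⟨w, rfl, rfl⟩ | ⟨w, rfl, rfl⟩
  · rcases eq_or_ne w [] with rfl | hw
    · simp
    · exact Or.inr ⟨w, hw, suffix_append _ _, rfl⟩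
  · exact Or.inl (suffix_append _ _)

section

variable {α : Type*} [LinearOrder α]

theorem le_append (s t : List α) : s ≤ s ++ t := not_lt.1 le_append_left

theorem append_singleton_lt_append_singleton {s t : List α} {c : α} (hc : ∀ b, c ≤ b)
    (h : s < t) : s ++ [c] < t ++ [c] := by
  induction h with
  | @nil b l =>
    rcases (hc b).lt_or_eq with hcb | rfl
    · exact Lex.rel hcb
    · exact Lex.cons (by cases l <;> exact Lex.nil)
  | rel h => exact Lex.rel h
  | cons _ ih => exact Lex.cons ih

theorem lt_append_iff_of_length_lt {s l t : List α} (h : s.length < l.length) :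
    s < l ++ t ↔ s < l := by
  induction s generalizing l with
  | nil => cases l <;> simp_all
  | cons a s ih =>
    cases l with
    | nil => simp at h
    | cons b l => simp [cons_lt_cons_iff, ih (Nat.lt_of_succ_lt_succ h)]

theorem append_lt_iff_of_length_lt {s l t : List α} (h : s.length < l.length) :
    l ++ t < s ↔ l < s := by
  induction s generalizing l with
  | nil => simp
  | cons a s ih =>
    cases l with
    | nil => simp at h
    | cons b l => simp [cons_lt_cons_iff, ih (Nat.lt_of_succ_lt_succ h)]

theorem le_cons_append_of_forall_le {l : List α} {e : α} (h : ∀ b ∈ l, b ≤ e)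
    (m : List α) : l ≤ e :: (l ++ m) := by
  induction l with
  | nil => exact not_lt.1 (not_lt_nil _)
  | cons a l ih =>
    rcases (h a mem_cons_self).lt_or_eq with hae | rfl
    · exact le_of_lt (Lex.rel hae)
    · exact cons_le_cons a (ih fun b hb => h b (mem_cons_of_mem a hb))

end

end List

namespace NTerm

theorem postfixStr_eq_reverse (t : NTerm) : postfixStr t = (prefixStr t).reverse := by
  induction t with
  | zero | Om => rfl
  | C a b iha ihb => simp [postfixStr, prefixStr, iha, ihb]

theorem eq_of_prefixStr_append_eq {a b : NTerm} {l l' : List NSym}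
    (h : prefixStr a ++ l = prefixStr b ++ l') : a = b ∧ l = l' := by
  induction a generalizing b l l' with
  | zero | Om => cases b <;> simp_all [prefixStr]
  | C a₁ a₂ ih₁ ih₂ =>
    cases b with
    | zero | Om => simp [prefixStr] at h
    | C b₁ b₂ =>
      simp only [prefixStr, List.cons_append, List.append_assoc, List.cons.injEq, true_and] at h
      obtain ⟨rfl, h₂⟩ := ih₁ h
      obtain ⟨rfl, rfl⟩ := ih₂ h₂
      exact ⟨rfl, rfl⟩

theorem postfixStr_injective : Function.Injective postfixStr := by
  intro a b h
  simp only [postfixStr_eq_reverse, List.reverse_inj] at h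
  exact (eq_of_prefixStr_append_eq (l := []) (l' := []) (by simpa using h)).1

instance : LinearOrder NTerm := LinearOrder.lift' postfixStr postfixStr_injective

theorem lt_iff_postfixStr_lt {a b : NTerm} : a < b ↔ postfixStr a < postfixStr b := Iff.rfl

theorem le_iff_postfixStr_le {a b : NTerm} : a ≤ b ↔ postfixStr a ≤ postfixStr b := Iff.rfl

theorem postfixStr_C (a b : NTerm) :
    postfixStr (C a b) = postfixStr b ++ (postfixStr a ++ [NSym.C]) := by
  rw [postfixStr, List.append_assoc]

theorem exists_postfixStr_eq_cons (t : NTerm) :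
    ∃ e l, postfixStr t = e :: l ∧ e ≠ NSym.C := by
  induction t with
  | zero => exact ⟨_, [], rfl, nofun⟩
  | Om => exact ⟨_, [], rfl, nofun⟩
  | C a b _ ihb =>
    obtain ⟨e, l, hb, he⟩ := ihb
    exact ⟨e, l ++ postfixStr a ++ [NSym.C], by simp [postfixStr, hb], he⟩

theorem postfixStr_ne_nil (t : NTerm) : postfixStr t ≠ [] := by
  obtain ⟨e, l, h, -⟩ := exists_postfixStr_eq_cons t
  simp [h]

theorem lt_C_right (a b : NTerm) : b < C a b := by
  rw [lt_iff_postfixStr_lt, postfixStr_C]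
  exact List.le_append .. |>.lt_of_ne (by simp)

theorem C_le_C_left {a a' : NTerm} (h : a ≤ a') (b : NTerm) : C a b ≤ C a' b := by
  rcases h.lt_or_eq with h | rfl
  · rw [le_iff_postfixStr_le, postfixStr_C, postfixStr_C]
    exact (List.append_left_lt (List.append_singleton_lt_append_singleton NSym.C_le h)).le
  · exact le_rfl

theorem PSub.length_lt {z t : NTerm} (h : PSub z t) :
    (postfixStr z).length < (postfixStr t).length := by
  induction h <;> simp only [postfixStr, List.length_append, List.length_singleton] <;>
    grind [List.length_pos_iff, postfixStr_ne_nil]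

theorem eq_Om_or_psub_of_Om_mem {t : NTerm} (h : NSym.Om ∈ postfixStr t) :
    t = Om ∨ PSub Om t := by
  induction t with
  | zero => simp [postfixStr] at h
  | Om => exact Or.inl rfl
  | C a b iha ihb =>
    simp only [postfixStr, List.mem_append, List.mem_singleton, reduceCtorEq, or_false] at h
    rcases h with h | h
    · rcases ihb h with rfl | h
      exacts [Or.inr (.right a _), Or.inr (.transRight _ a b h)]
    · rcases iha h with rfl | h
      exacts [Or.inr (.left _ b), Or.inr (.transLeft _ a b h)]

end NTerm

theorem tlt_iff_lt {a b : NTerm} : tlt a b ↔ a < b := by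
  have : symLt = (· < ·) := by ext; exact symLt_iff_lt
  rw [tlt, this]
  rfl

theorem tlt_or_eq_iff_le {a b : NTerm} : tlt a b ∨ a = b ↔ a ≤ b := by
  rw [tlt_iff_lt, le_iff_lt_or_eq]

open NTerm

theorem nlt_of_forall_lt {k : ℕ} {y b₁ b₂ : NTerm}
    (H : ∀ w, (postfixStr w).length ≤ (postfixStr y).length → w < b₁ → w < b₂)
    (h : nlt k y b₁) : nlt k y b₂ := by
  induction k generalizing y with
  | zero => exact tlt_iff_lt.2 (H y le_rfl (tlt_iff_lt.1 h))
  | succ k ih =>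
    intro x hx hyx
    obtain ⟨w, hwx, hw⟩ := h x hx hyx
    refine ⟨w, hwx, ih (fun w' hw' => H w' ?_) hw⟩
    have := hwx.length_lt
    rcases hx with rfl | hx
    · omega
    · have := hx.length_lt
      omega

def OmLeads (l : List NSym) : Prop := NSym.Om ∈ l → l.head? = some NSym.Om

theorem OmLeads.append_replicate {σ r : List NSym} (h : OmLeads (σ ++ r)) (hσ : σ ≠ [])
    (k : ℕ) : OmLeads (σ ++ List.replicate k NSym.C) := by
  obtain ⟨b, σ, rfl⟩ := List.exists_cons_of_ne_nil hσ
  intro hm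
  have : NSym.Om ∈ b :: σ := by simpa [List.mem_replicate] using hm
  simpa using h (List.mem_append_left r this)

theorem omLeads_of_nlt {k : ℕ} {x b : NTerm} (h : nlt (k + 1) x b) : OmLeads (postfixStr x) := by
  intro hOm
  obtain ⟨e, l, hx, -⟩ := exists_postfixStr_eq_cons x
  rw [hx, List.head?_cons, Option.some.injEq]
  by_contra he
  rcases eq_Om_or_psub_of_Om_mem hOm with rfl | hsub
  · simp [postfixStr] at hx
    exact he hx.1.symm
  · have hxOm : tlt x Om := by
      rw [tlt_iff_lt, lt_iff_postfixStr_lt, hx]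
      exact List.Lex.rel (NSym.lt_Om_of_ne he)
    obtain ⟨y, hy, -⟩ := h Om (.inr hsub) hxOm
    cases hy

theorem le_C_of_forall_le_head {n : ℕ} {u s : NTerm} {e : NSym} (h : Std n (C u s))
    (he : (postfixStr s).head? = some e) (hb : ∀ b ∈ postfixStr (C u s), b ≤ e) :
    u ≤ C u s := by
  induction s generalizing u with
  | zero | Om =>
    simp only [postfixStr, List.head?_cons, Option.some.injEq] at he
    subst he
    rw [le_iff_postfixStr_le, postfixStr]
    exact List.le_cons_append_of_forall_le (fun b hb' => hb b (by simp [postfixStr, hb'])) _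
  | C c d _ ihd =>
    obtain ⟨-, hs, hord, -⟩ := h
    have huc : u ≤ c := tlt_or_eq_iff_le.1 (by simpa using hord)
    have hcs : c ≤ C c d := by
      refine ihd hs ?_ fun b hb' => hb b ?_
      · obtain ⟨e', l, hd, -⟩ := exists_postfixStr_eq_cons d
        simpa [postfixStr, hd] using he
      · simp only [postfixStr, List.mem_append] at hb' ⊢
        tauto
    have hsus : C c d ≤ C u (C c d) := by
      rw [le_iff_postfixStr_le, postfixStr_C u]
      exact List.le_append _ _
    exact huc.trans (hcs.trans hsus)

theorem le_C_of_omLeads {n : ℕ} {u s : NTerm} (h : Std n (C u s))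
    (hl : OmLeads (postfixStr (C u s))) : u ≤ C u s := by
  obtain ⟨e, l, hs, heC⟩ := exists_postfixStr_eq_cons s
  refine le_C_of_forall_le_head h (e := e) (by simp [hs]) ?_
  by_cases he : e = NSym.Om
  · exact fun b _ => he ▸ NSym.le_Om b
  have hOm : NSym.Om ∉ postfixStr (C u s) := fun hm => he (by simpa [postfixStr, hs] using hl hm)
  have : e = NSym.zero := by cases e <;> simp_all
  intro b hb
  exact this ▸ NSym.le_zero_of_ne_Om (ne_of_mem_of_not_mem hb hOm)

theorem std_C_of_prefix {m k : ℕ} {x y t : NTerm} {σ r : List NSym}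
    (hxy : Std (m + 1) (C x y)) (ht : Std (m + 1) t) (htx : t ≤ x)
    (hx : postfixStr x = σ ++ r) (htσ : postfixStr t = σ ++ List.replicate k NSym.C)
    (hsub : ∀ z, PSub z t → (PSub z x ∧ (postfixStr z).length < σ.length) ∨ z ≤ t) :
    Std (m + 1) (C t y) := by
  obtain ⟨-, hy, hord, hnlt⟩ := hxy
  refine ⟨ht, hy, ?_, ?_⟩
  · rcases hord with h | h | ⟨c, d, rfl, hxc⟩
    · exact Or.inl h
    · exact Or.inr (Or.inl h)
    · rw [tlt_or_eq_iff_le] at hxc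
      exact Or.inr (Or.inr ⟨c, d, rfl, tlt_or_eq_iff_le.2 (htx.trans hxc)⟩)
  rintro z (rfl | hz) htz
  · exact absurd (tlt_iff_lt.1 htz) (lt_irrefl z)
  rw [tlt_iff_lt] at htz
  obtain ⟨hzx, hlen⟩ := (hsub z hz).resolve_right (not_le.2 htz)
  have hxz : tlt x z := by
    rw [tlt_iff_lt, lt_iff_postfixStr_lt, hx, List.append_lt_iff_of_length_lt hlen]
    rwa [lt_iff_postfixStr_lt, htσ, List.append_lt_iff_of_length_lt hlen] at htz
  obtain ⟨w, hwz, hw⟩ := hnlt z (.inr hzx) hxz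
  refine ⟨w, hwz, nlt_of_forall_lt (fun w' hw' hw'x => ?_) hw⟩
  have hlen' : (postfixStr w').length < (postfixStr y ++ σ).length := by
    have := hwz.length_lt
    simp only [List.length_append]
    omega
  simp only [lt_iff_postfixStr_lt, postfixStr_C, hx, htσ, List.append_assoc] at hw'x ⊢
  rw [← List.append_assoc, List.lt_append_iff_of_length_lt hlen'] at hw'x ⊢
  exact hw'x

/-- `SuffixTerm a t`: `prefixStr t` is `'C'^j ++ v` for a nonempty suffix `v` of `prefixStr a`
(see `exists_suffixTerm`). Cutting `prefixStr a` inside the right argument `y` of `C(x, y)`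
discards `x`; cutting it inside `x` keeps the node, now with the cut `x` as left argument. -/
inductive SuffixTerm : NTerm → NTerm → Prop
  | self (a : NTerm) : SuffixTerm a a
  | right (x y t : NTerm) : SuffixTerm y t → SuffixTerm (C x y) t
  | left (x y t : NTerm) : SuffixTerm x t → SuffixTerm (C x y) (C t y)

theorem exists_suffixTerm {a : NTerm} {v : List NSym} (hv : v ≠ []) (hsuf : v <:+ prefixStr a) :
    ∃ t j, SuffixTerm a t ∧ prefixStr t = List.replicate j NSym.C ++ v := by
  induction a generalizing v with
  | zero | Om =>
    obtain rfl | h := List.suffix_cons_iff.1 hsuf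
    · exact ⟨_, 0, .self _, rfl⟩
    · exact absurd (List.suffix_nil.1 h) hv
  | C x y ihx ihy =>
    obtain rfl | h := List.suffix_cons_iff.1 hsuf
    · exact ⟨_, 0, .self _, rfl⟩
    rcases h.suffix_or_eq_append with h | ⟨w, hw, hwx, rfl⟩
    · obtain ⟨t, j, ht, hp⟩ := ihy hv h
      exact ⟨t, j, .right x y t ht, hp⟩
    · obtain ⟨t, j, ht, hp⟩ := ihx hw hwx
      exact ⟨C t y, j + 1, .left x y t ht, by simp [prefixStr, hp, List.replicate_succ]⟩

theorem SuffixTerm.std {m : ℕ} {a t : NTerm} (h : SuffixTerm a t) (ha : Std (m + 1) a) :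
    Std (m + 1) t ∧ t ≤ a ∧ ∃ σ k r, σ ≠ [] ∧ postfixStr a = σ ++ r ∧
      postfixStr t = σ ++ List.replicate k NSym.C ∧
      ∀ z, PSub z t → (PSub z a ∧ (postfixStr z).length < σ.length) ∨
        ∃ t' s', t = C t' s' ∧ z ≤ t' := by
  induction h with
  | self a =>
    exact ⟨ha, le_rfl, postfixStr a, 0, [], postfixStr_ne_nil a, by simp, by simp,
      fun z hz => Or.inl ⟨hz, hz.length_lt⟩⟩
  | right x y t _ ih =>
    obtain ⟨-, hy, -, -⟩ := ha
    obtain ⟨ht, hty, σ, k, r, hσ, hyσ, htσ, hsub⟩ := ih hy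
    refine ⟨ht, hty.trans (lt_C_right x y).le, σ, k, r ++ (postfixStr x ++ [NSym.C]), hσ,
      by simp [postfixStr, hyσ], htσ, fun z hz => ?_⟩
    exact (hsub z hz).imp_left fun ⟨hzy, hlen⟩ => ⟨.transRight _ _ _ hzy, hlen⟩
  | left x y t _ ih =>
    obtain ⟨hx, -, -, hnlt⟩ := id ha
    obtain ⟨ht, htx, σ, k, r, hσ, hxσ, htσ, hsub⟩ := ih hx
    have hlead : OmLeads (postfixStr t) :=
      htσ ▸ (hxσ ▸ omLeads_of_nlt hnlt).append_replicate hσ k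
    have hsub' :
        ∀ z, PSub z t → (PSub z x ∧ (postfixStr z).length < σ.length) ∨ z ≤ t := by
      intro z hz
      refine (hsub z hz).imp_right ?_
      rintro ⟨t', s', rfl, hzt'⟩
      exact hzt'.trans (le_C_of_omLeads ht hlead)
    refine ⟨std_C_of_prefix ha ht htx hxσ htσ hsub', C_le_C_left htx y,
      postfixStr y ++ σ, k + 1, r ++ [NSym.C], by simp [hσ], by simp [postfixStr, hxσ],
      by simp [postfixStr, htσ, List.replicate_succ'], fun z hz => ?_⟩
    have hσpos := List.length_pos_iff.2 hσ
    cases hz with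
    | left => exact Or.inr ⟨t, y, rfl, le_rfl⟩
    | right => exact Or.inl ⟨.right x y, by simp; omega⟩
    | transRight _ _ _ hzy =>
      have := hzy.length_lt
      exact Or.inl ⟨.transRight _ _ _ hzy, by simp; omega⟩
    | transLeft _ _ _ hzt =>
      rcases hsub' z hzt with ⟨hzx, hlen⟩ | hzt
      · exact Or.inl ⟨.transLeft _ _ _ hzx, by simp; omega⟩
      · exact Or.inr ⟨t, y, rfl, hzt⟩

theorem suffix_of_standard_is_standard (n : ℕ) (hn : 0 < n)
    (a : NTerm) (ha : Std n a) (v : List NSym) (hv : v ≠ [])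
    (hsuf : v <:+ prefixStr a) :
    ∃ (j : ℕ) (t : NTerm), Std n t ∧ prefixStr t = List.replicate j NSym.C ++ v := by
  obtain ⟨m, rfl⟩ := Nat.exists_eq_add_one_of_ne_zero hn.ne'
  obtain ⟨t, j, ht, hp⟩ := exists_suffixTerm hv hsuf
  exact ⟨j, t, (ht.std ha).1, hp⟩
end

section
/- Let D be a degree on the ordinal S. Whenever C_1(a,b) is defined, C_1(a,b) ≤ b + a. Moreover, if in addition a ≤ ε, where ε is the least ordinal x > b with ω^x = x (the least fixpoint of exponentiation base ω above b), then C_1(a,b) = b + a. -/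
open Ordinal Set

/-- The graph of the one-variable collapsing function: `C1Rel S D a b v` means that
`C₁(a, b)` is defined and equal to `v`.  It is defined by recursion on `a`: for `a > 0`
write `a = ω ^ e + d` where `ω ^ e` is the leading term of the Cantor normal form of `a`
(so `e = log ω a` and `d < a`); if `e` is maximal in `C(e, b)` then
`C₁(a, b) = C₁(d, C(e, b))`, and if `C(e, b)` is defined but `e` is not maximal in it,
then `C₁(a, b) = C(e, b)`. -/
inductive C1Rel (S : Ordinal) (D : Ordinal → Ordinal → Prop) :
    Ordinal → Ordinal → Ordinal → Prop
  | zero (b : Ordinal) : C1Rel S D 0 b b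
  | max_step (a b e d v : Ordinal) : a ≠ 0 → e = Ordinal.log omega0 a →
      a = omega0 ^ e + d → CMaximal S D e b → C1Rel S D d (Cval S D e b) v →
      C1Rel S D a b v
  | nonmax_step (a b e d : Ordinal) : a ≠ 0 → e = Ordinal.log omega0 a →
      a = omega0 ^ e + d → CDefined S D e b → ¬ CMaximal S D e b →
      C1Rel S D a b (Cval S D e b)

/-! A nonzero `c < S` divisible by `ω ^ a` has degree `a`, and conversely a nonzero `c` of
degree `a` is divisible by `ω ^ a` unless `c` is an epsilon number `≤ a`. Hence
`C(e, b) ≤ b + ω ^ e`, the least multiple of `ω ^ e` above `b`, with equality as long as `e` does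
not exceed the least epsilon number `ε` above `b`. For `e < ε` the value `b + ω ^ e` is neither a
multiple of `ω ^ (e + 1)` nor an epsilon number, so `e` is maximal in `C(e, b)`. Following the
recursion for `C₁` along the Cantor normal form of `a` then adds these terms up to `b + a`. -/

open Order

namespace Ordinal

theorem add_omega0_opow_eq_mul (b e : Ordinal) : b + ω ^ e = ω ^ e * (b / ω ^ e + 1) := by
  conv_lhs => rw [← div_add_mod b (ω ^ e)]
  rw [add_assoc, add_omega0_opow (mod_lt b (opow_ne_zero e omega0_ne_zero)), mul_add_one]

theorem omega0_opow_dvd_add (b e : Ordinal) : ω ^ e ∣ b + ω ^ e :=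
  ⟨_, add_omega0_opow_eq_mul b e⟩

theorem add_omega0_opow_le_of_dvd {b c e : Ordinal} (hd : ω ^ e ∣ c) (hbc : b < c) :
    b + ω ^ e ≤ c := by
  obtain ⟨k, rfl⟩ := hd
  rw [add_omega0_opow_eq_mul]
  exact mul_le_mul_right
    (add_one_le_of_lt ((lt_mul_iff_div_lt (opow_ne_zero e omega0_ne_zero)).1 hbc)) _

theorem add_omega0_opow_lt_of_dvd {b c e : Ordinal} (hd : ω ^ (e + 1) ∣ c) (hbc : b < c) :
    b + ω ^ e < c :=
  (add_lt_add_right ((opow_lt_opow_iff_right one_lt_omega0).2 (lt_add_one e)) b).trans_le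
    (add_omega0_opow_le_of_dvd hd hbc)

theorem mul_omega0_dvd_of_forall_exists_dvd {p c : Ordinal} (hc : c ≠ 0)
    (h : ∀ b < c, ∃ x, p ∣ x ∧ b < x ∧ x < c) : p * ω ∣ c := by
  have no_gap : ∀ w, p * w < c → c ≤ p * (w + 1) → False := by
    intro w hw hcw
    obtain ⟨_, ⟨k, rfl⟩, hwk, hkc⟩ := h _ hw
    exact (lt_of_mul_lt_mul_left' (hkc.trans_le hcw)).not_ge
      (add_one_le_of_lt (lt_of_mul_lt_mul_left' hwk))
  have hp : p ≠ 0 := by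
    rintro rfl
    obtain ⟨x, hx, hx0, -⟩ := h 0 (pos_iff_ne_zero.2 hc)
    exact hx0.ne' (zero_dvd_iff.1 hx)
  have hc_eq : p * (c / p) = c := by
    by_contra hne
    exact no_gap _ ((mul_div_le c p).lt_of_ne hne) (lt_mul_succ_div c hp).le
  rcases zero_or_succ_or_isSuccLimit (c / p) with h0 | ⟨w, hw⟩ | hlim
  · exact absurd (by rw [← hc_eq, h0, mul_zero]) hc
  · rw [succ_eq_add_one] at hw
    refine (no_gap w ?_ (by rw [hw, hc_eq])).elim
    rw [← hc_eq, ← hw]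
    exact mul_lt_mul_of_pos_left (lt_add_one w) (pos_iff_ne_zero.2 hp)
  · obtain ⟨k, hk⟩ := isSuccPrelimit_iff_omega0_dvd.1 hlim.isSuccPrelimit
    exact ⟨k, by rw [mul_assoc, ← hk, hc_eq]⟩

theorem omega0_opow_dvd_of_isSuccLimit {a c : Ordinal} (ha : IsSuccLimit a)
    (h : ∀ b < a, ω ^ b ∣ c) : ω ^ a ∣ c := by
  rw [dvd_iff_mod_eq_zero]
  obtain ⟨b, hba, hmod⟩ := (lt_opow_of_isSuccLimit omega0_ne_zero ha).1
    (mod_lt c (opow_ne_zero a omega0_ne_zero))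
  have hdvd : ω ^ b ∣ c % ω ^ a := by
    rw [← dvd_add_iff ((opow_dvd_opow ω hba.le).mul_right _), div_add_mod]
    exact h b hba
  by_contra hne
  exact (le_of_dvd hne hdvd).not_gt hmod

theorem omega0_opow_eq_self_of_forall_exists {c : Ordinal} (hc : IsSuccLimit c)
    (h : ∀ b < c, ∃ x, ω ^ x = x ∧ b < x ∧ x < c) : ω ^ c = c := by
  refine le_antisymm ((opow_le_of_isSuccLimit omega0_ne_zero hc).2 fun b hb => ?_)
    (right_le_opow c one_lt_omega0)
  obtain ⟨x, hx, hbx, hxc⟩ := h b hb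
  calc ω ^ b ≤ ω ^ x := opow_le_opow_right omega0_pos hbx.le
    _ = x := hx
    _ ≤ c := hxc.le

theorem omega0_opow_succ_dvd_or_of_mem_limPts {X : Set Ordinal} {a c : Ordinal}
    (hX : ∀ x ∈ X, x ≠ 0 → ω ^ a ∣ x ∨ (ω ^ x = x ∧ x ≤ a)) (hc : c ∈ limPts X) :
    ω ^ (a + 1) ∣ c ∨ (ω ^ c = c ∧ c ≤ a) := by
  obtain ⟨hlim, hwit⟩ := hc
  rcases lt_or_ge (ω ^ a) c with hac | hca
  · left
    rw [opow_add_one]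
    refine mul_omega0_dvd_of_forall_exists_dvd hlim.ne_bot fun b hb => ?_
    obtain ⟨x, hxX, hbx, hxc⟩ := hwit (max b (ω ^ a)) (max_lt hb hac)
    have hax : ω ^ a < x := (le_max_right _ _).trans_lt hbx
    refine ⟨x, ?_, (le_max_left _ _).trans_lt hbx, hxc⟩
    refine (hX x hxX (pos_of_gt hax).ne').resolve_right fun hfix => ?_
    exact hfix.2.not_gt ((right_le_opow a one_lt_omega0).trans_lt hax)
  · right
    have hfix : ∀ b < c, ∃ x, (ω ^ x = x ∧ x ≤ a) ∧ b < x ∧ x < c := by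
      intro b hb
      obtain ⟨x, hxX, hbx, hxc⟩ := hwit b hb
      have hx0 : x ≠ 0 := (pos_of_gt hbx).ne'
      refine ⟨x, (hX x hxX hx0).resolve_left fun hd => ?_, hbx, hxc⟩
      exact (le_of_dvd hx0 hd).not_gt (hxc.trans_le hca)
    refine ⟨omega0_opow_eq_self_of_forall_exists hlim fun b hb => ?_, le_of_not_gt fun hac => ?_⟩
    · obtain ⟨x, ⟨hx, -⟩, hbx⟩ := hfix b hb
      exact ⟨x, hx, hbx⟩
    · obtain ⟨x, ⟨-, hxa⟩, hax, -⟩ := hfix a hac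
      exact hxa.not_gt hax

end Ordinal

namespace IsDegree

variable {S : Ordinal} {D : Ordinal → Ordinal → Prop}

theorem succ_of_mem_limPts (hD : IsDegree S D) {a c : Ordinal} (ha : a + 1 < S) (hc : c < S)
    (hlim : c ∈ limPts {x | x < S ∧ D x a}) : D c (a + 1) := by
  have hmem : c ∈ {c | c < S ∧ D c (a + 1)} := by
    rcases hD.succ a ha with h | ⟨d, -, -, -, h⟩ <;> rw [h]
    exacts [⟨hlim, hc⟩, ⟨Or.inl hlim, hc⟩]
  exact hmem.2

theorem mem_limPts_or_of_succ (hD : IsDegree S D) {a c : Ordinal} (ha : a + 1 < S) (hc : c < S)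
    (h : D c (a + 1)) : c ∈ limPts {x | x < S ∧ D x a} ∨ (D c a ∧ c ≤ a) := by
  have hmem : c ∈ {c | c < S ∧ D c (a + 1)} := ⟨hc, h⟩
  rcases hD.succ a ha with h | ⟨d, hda, -, -, h⟩ <;> rw [h] at hmem
  · exact Or.inl hmem.1
  · exact hmem.1.imp id fun h => ⟨h.1.2, h.2.trans hda⟩

theorem of_omega0_opow_dvd (hD : IsDegree S D) {a c : Ordinal} (ha : a < S) (hc : c < S)
    (hc0 : c ≠ 0) (hd : ω ^ a ∣ c) : D c a := by
  induction a using limitRecOn generalizing c with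
  | zero => exact hD.deg_zero c hc
  | add_one a IH =>
    have hω : ω ∣ c := (opow_one ω ▸ opow_dvd_opow ω le_add_self).trans hd
    refine hD.succ_of_mem_limPts ha hc
      ⟨isSuccLimit_iff.2 ⟨hc0, isSuccPrelimit_iff_omega0_dvd.2 hω⟩, fun b hb => ?_⟩
    have hbx : b < b + ω ^ a := lt_add_of_pos_right b (opow_pos a omega0_pos)
    have hxc : b + ω ^ a < c := add_omega0_opow_lt_of_dvd hd hb
    exact ⟨b + ω ^ a, ⟨hxc.trans hc, IH ((lt_add_one a).trans ha) (hxc.trans hc)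
      (pos_of_gt hbx).ne' (omega0_opow_dvd_add b a)⟩, hbx, hxc⟩
  | limit a hlim IH =>
    exact (hD.limit a ha hlim c hc).2 fun b hb =>
      IH b hb (hb.trans ha) hc hc0 ((opow_dvd_opow ω hb.le).trans hd)

theorem omega0_opow_dvd_or_of_deg (hD : IsDegree S D) {a c : Ordinal} (ha : a < S) (hc : c < S)
    (hc0 : c ≠ 0) (h : D c a) : ω ^ a ∣ c ∨ (ω ^ c = c ∧ c ≤ a) := by
  induction a using limitRecOn generalizing c with
  | zero => exact Or.inl (opow_zero ω ▸ one_dvd c)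
  | add_one a IH =>
    have ha' : a < S := (lt_add_one a).trans ha
    rcases hD.mem_limPts_or_of_succ ha hc h with hlim | ⟨hca, hle⟩
    · refine (omega0_opow_succ_dvd_or_of_mem_limPts (fun x hx hx0 => ?_) hlim).imp_right
        fun hfix => ⟨hfix.1, hfix.2.trans le_self_add⟩
      exact IH ha' hx.1 hx0 hx.2
    · right
      refine ⟨?_, hle.trans le_self_add⟩
      rcases IH ha' hc hc0 hca with hd | hfix
      · have hac : ω ^ a ≤ c := le_of_dvd hc0 hd
        obtain rfl : c = a := hle.antisymm ((right_le_opow a one_lt_omega0).trans hac)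
        exact hac.antisymm (right_le_opow c one_lt_omega0)
      · exact hfix.1
  | limit a hlim IH =>
    by_cases hall : ∀ b < a, ω ^ b ∣ c
    · exact Or.inl (omega0_opow_dvd_of_isSuccLimit hlim hall)
    · obtain ⟨b, hba, hnd⟩ := not_forall₂.1 hall
      have hfix := (IH b hba (hba.trans ha) hc hc0
        ((hD.limit a ha hlim c hc).1 h b hba)).resolve_left hnd
      exact Or.inr ⟨hfix.1, hfix.2.trans hba.le⟩

end IsDegree

namespace Ordinal

theorem lt_nfp_opow (b : Ordinal) : b < nfp (ω ^ ·) (b + 1) :=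
  (lt_add_one b).trans_le (le_nfp _ _)

theorem opow_nfp_opow (b : Ordinal) : ω ^ nfp (ω ^ ·) b = nfp (ω ^ ·) b :=
  nfp_fp (isNormal_opow one_lt_omega0) b

theorem nfp_opow_le {b x : Ordinal} (hbx : b < x) (hx : ω ^ x = x) : nfp (ω ^ ·) (b + 1) ≤ x :=
  nfp_le_fp (fun _ _ => opow_le_opow_right omega0_pos) (add_one_le_of_lt hbx) hx.le

theorem sInf_opow_fixedPoints_gt (b : Ordinal) :
    sInf {x : Ordinal | b < x ∧ ω ^ x = x} = nfp (ω ^ ·) (b + 1) :=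
  (csInf_le' (s := {x | b < x ∧ ω ^ x = x}) ⟨lt_nfp_opow b, opow_nfp_opow _⟩).antisymm
    (le_csInf ⟨_, lt_nfp_opow b, opow_nfp_opow _⟩ fun _ hx => nfp_opow_le hx.1 hx.2)

theorem add_nfp_opow (b : Ordinal) : b + nfp (ω ^ ·) (b + 1) = nfp (ω ^ ·) (b + 1) :=
  add_of_omega0_opow_le ((opow_nfp_opow _).symm ▸ lt_nfp_opow b) (opow_nfp_opow _).le

theorem add_omega0_opow_le_nfp {b e : Ordinal} (he : e ≤ nfp (ω ^ ·) (b + 1)) :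
    b + ω ^ e ≤ nfp (ω ^ ·) (b + 1) := by
  calc b + ω ^ e ≤ b + ω ^ nfp (ω ^ ·) (b + 1) :=
        add_le_add_right (opow_le_opow_right omega0_pos he) b
    _ = nfp (ω ^ ·) (b + 1) := by rw [opow_nfp_opow, add_nfp_opow]

theorem add_omega0_opow_lt_nfp {b e : Ordinal} (he : e < nfp (ω ^ ·) (b + 1)) :
    b + ω ^ e < nfp (ω ^ ·) (b + 1) := by
  calc b + ω ^ e < b + ω ^ nfp (ω ^ ·) (b + 1) :=
        add_lt_add_right ((opow_lt_opow_iff_right one_lt_omega0).2 he) b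
    _ = nfp (ω ^ ·) (b + 1) := by rw [opow_nfp_opow, add_nfp_opow]

end Ordinal

section Collapsing

variable {S : Ordinal} {D : Ordinal → Ordinal → Prop} {e b : Ordinal}

theorem CDefined.lt (h : CDefined S D e b) : e < S := by
  obtain ⟨_, -, -, a', hea', ha'S, -⟩ := h
  exact hea'.trans_lt ha'S

theorem CDefined.cval_mem (h : CDefined S D e b) : Cval S D e b ∈ CSet S D e b :=
  csInf_mem h

theorem cval_le_add_omega0_opow (hD : IsDegree S D) (h : CDefined S D e b) :
    Cval S D e b ≤ b + ω ^ e := by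
  have hbx : b < b + ω ^ e := lt_add_of_pos_right b (opow_pos e omega0_pos)
  rcases lt_or_ge (b + ω ^ e) S with hS | hS
  · exact csInf_le' ⟨hS, hbx, e, le_rfl, h.lt,
      hD.of_omega0_opow_dvd h.lt hS (pos_of_gt hbx).ne' (omega0_opow_dvd_add b e)⟩
  · exact h.cval_mem.1.le.trans hS

theorem cval_eq_add_omega0_opow (hD : IsDegree S D) (h : CDefined S D e b)
    (he : e ≤ nfp (ω ^ ·) (b + 1)) : Cval S D e b = b + ω ^ e := by
  obtain ⟨hcS, hbc, a', hea', ha'S, hdeg⟩ := h.cval_mem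
  refine (cval_le_add_omega0_opow hD h).antisymm ?_
  rcases hD.omega0_opow_dvd_or_of_deg ha'S hcS (pos_of_gt hbc).ne' hdeg with hd | ⟨hfix, -⟩
  · exact add_omega0_opow_le_of_dvd ((opow_dvd_opow ω hea').trans hd) hbc
  · exact (add_omega0_opow_le_nfp he).trans (nfp_opow_le hbc hfix)

theorem cMaximal_of_lt_nfp (hD : IsDegree S D) (h : CDefined S D e b)
    (he : e < nfp (ω ^ ·) (b + 1)) : CMaximal S D e b := by
  refine ⟨h, fun a' hea' ha'S hdeg => ?_⟩
  have hC := cval_eq_add_omega0_opow hD h he.le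
  obtain ⟨hcS, hbc, -⟩ := h.cval_mem
  rcases hD.omega0_opow_dvd_or_of_deg ha'S hcS (pos_of_gt hbc).ne' hdeg with hd | ⟨hfix, -⟩
  · have hd' : ω ^ (e + 1) ∣ Cval S D e b := (opow_dvd_opow ω (add_one_le_of_lt hea')).trans hd
    exact (add_omega0_opow_lt_of_dvd hd' hbc).ne hC.symm
  · exact (nfp_opow_le hbc hfix).not_gt (hC ▸ add_omega0_opow_lt_nfp he)

end Collapsing

namespace C1Rel

variable {S : Ordinal} {D : Ordinal → Ordinal → Prop} {a b v : Ordinal}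

theorem le_add (hD : IsDegree S D) (h : C1Rel S D a b v) : v ≤ b + a := by
  induction h with
  | zero b => rw [add_zero]
  | max_step a b e d v _ _ had hmax _ ih =>
    calc v ≤ Cval S D e b + d := ih
      _ ≤ b + ω ^ e + d := add_le_add_left (cval_le_add_omega0_opow hD hmax.1) d
      _ = b + a := by rw [had, add_assoc]
  | nonmax_step a b e d _ _ had hdef _ =>
    exact (cval_le_add_omega0_opow hD hdef).trans (add_le_add_right (had ▸ le_self_add) b)

theorem eq_add (hD : IsDegree S D) (h : C1Rel S D a b v) (ha : a ≤ nfp (ω ^ ·) (b + 1)) :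
    v = b + a := by
  induction h with
  | zero b => rw [add_zero]
  | max_step a b e d v _ he had hmax _ ih =>
    have hC := cval_eq_add_omega0_opow hD hmax.1 ((he ▸ log_le_self ω a).trans ha)
    have hbC : b < Cval S D e b := hmax.1.cval_mem.2.1
    have hd : d ≤ nfp (ω ^ ·) (Cval S D e b + 1) :=
      (had ▸ le_add_self).trans (ha.trans (nfp_opow_le (hbC.trans (lt_nfp_opow _))
        (opow_nfp_opow _)))
    rw [ih hd, hC, add_assoc, ← had]
  | nonmax_step a b e d _ he had hdef hnmax =>
    have hea : e ≤ a := he ▸ log_le_self ω a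
    have he_eq : e = nfp (ω ^ ·) (b + 1) :=
      (hea.trans ha).antisymm (not_lt.1 fun hlt => hnmax (cMaximal_of_lt_nfp hD hdef hlt))
    have hd : d = 0 := by
      have : ω ^ e + d ≤ ω ^ e := by rw [← had, he_eq, opow_nfp_opow]; exact ha
      exact nonpos_iff_eq_zero.1 ((add_le_iff_nonpos_right _).1 this)
    rw [cval_eq_add_omega0_opow hD hdef (hea.trans ha), had, hd, add_zero]

end C1Rel

theorem C1_le_add_and_eq_add (S : Ordinal) (D : Ordinal → Ordinal → Prop)
    (hD : IsDegree S D) (a b v : Ordinal) (h : C1Rel S D a b v) :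
    v ≤ b + a ∧
      (a ≤ sInf {x : Ordinal | b < x ∧ omega0 ^ x = x} → v = b + a) := by
  rw [sInf_opow_fixedPoints_gt]
  exact ⟨h.le_add hD, h.eq_add hD⟩
end
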